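/- Fix 0 < α < β, c > 0, and an integer ℓ ≥ 1. Let (X_m)_{m∈ℤ}, the illuminated sites, and Θ_k be as in the long-range model. For N ∈ ℕ let Ẽ_N be the event that there exists j ∈ ℤ with |j| ≤ ⌈c N^{1+β}⌉ such that Θ_k = 1 for every k ∈ ℤ with |k − j| ≤ ℓN. Then there exists a constant C = C(α, β, c, ℓ) ≥ 1 such that ℙ(Ẽ_N) ≥ 1 − C exp(−C^{−1} N^{β−α}) for every N ∈ ℕ; in particular, ℙ(liminf_{N→∞} Ẽ_N) = 1, i.e. with probability one all but finitely many of the events Ẽ_N occur. -/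

import Mathlib

open MeasureTheory ProbabilityTheory Filter Topology
open scoped ENNReal

/-- The normalizing constant `Z_α = Σ_{k ≠ 0} |k|^{-(2+α)}` of the heavy-tailed law. -/
noncomputable def Zalpha (α : ℝ) : ℝ :=
  ∑' k : ℤ, if k = 0 then 0 else |(k : ℝ)| ^ (-(2 + α))

/-- A site `k ∈ ℤ` is illuminated (for the configuration `ω`) if some lamp `m`
has brightness `X m ω ≥ |m - k|`. -/
def Illuminated {Ω : Type*} (X : ℤ → Ω → ℤ) (k : ℤ) (ω : Ω) : Prop :=
  ∃ m : ℤ, |m - k| ≤ X m ω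

/-- The field `Θ_k`: equal to `1` on illuminated sites and `2` otherwise. -/
noncomputable def ThetaSite {Ω : Type*} (X : ℤ → Ω → ℤ) (k : ℤ) (ω : Ω) : ℝ :=
  haveI := Classical.propDecidable (Illuminated X k ω)
  if Illuminated X k ω then 1 else 2

/-- The random step function `θ^stripe(x) = Θ_{⌊x⌋}`. -/
noncomputable def thetaStripe {Ω : Type*} (X : ℤ → Ω → ℤ) (x : ℝ) (ω : Ω) : ℝ :=
  ThetaSite X ⌊x⌋ ω

/-!
A lamp `j` whose brightness lies in `[L, 2L]` illuminates every site within distance `L` of `j`.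
Under the law `∝ |k|^{-(2+α)}` this has probability `p ≳ L^{-(1+α)}`, and the lamps are
independent, so none of the lamps `|j| ≤ R` does so with probability at most
`(1 - p)^{2R+1} ≤ exp(-p (2R+1))`. For `L = ℓN` and `R = ⌈c N^{1+β}⌉` the exponent is
`≳ N^{β-α}`; these bounds are summable in `N`, and Borel–Cantelli gives the almost sure statement.
-/

lemma Zalpha_nonneg (α : ℝ) : 0 ≤ Zalpha α :=
  tsum_nonneg fun k => by split_ifs <;> positivity

lemma one_le_Zalpha {α : ℝ} (hα : -1 < α) : 1 ≤ Zalpha α := by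
  have hterm : ∀ k : ℤ, 0 ≤ if k = 0 then (0 : ℝ) else |(k : ℝ)| ^ (-(2 + α)) := fun k => by
    split_ifs <;> positivity
  have hsum : Summable fun k : ℤ => if k = 0 then (0 : ℝ) else |(k : ℝ)| ^ (-(2 + α)) :=
    (Real.summable_abs_int_rpow (by linarith : 1 < 2 + α)).of_nonneg_of_le hterm fun k => by
      split_ifs with h
      · subst h; positivity
      · rfl
  unfold Zalpha
  simpa using hsum.le_tsum 1 fun k _ => hterm k

lemma thetaSite_eq_one_of_abs_sub_le {Ω : Type*} {X : ℤ → Ω → ℤ} {ω : Ω} {j k : ℤ}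
    (h : |k - j| ≤ X j ω) : ThetaSite X k ω = 1 :=
  if_pos ⟨j, by rwa [abs_sub_comm]⟩

lemma summable_exp_neg_mul_natCast_rpow {r δ : ℝ} (hr : 0 < r) (hδ : 0 < δ) :
    Summable fun N : ℕ => Real.exp (-(r * (N : ℝ) ^ δ)) := by
  have hpow : Tendsto (fun N : ℕ => (N : ℝ) ^ δ) atTop atTop :=
    (tendsto_rpow_atTop hδ).comp tendsto_natCast_atTop_atTop
  have hrpow : ∀ N : ℕ, ((N : ℝ) ^ δ) ^ (-2 / δ) = (N : ℝ) ^ (-2 : ℝ) := fun N => by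
    rw [← Real.rpow_mul N.cast_nonneg]
    field_simp
  have hbigO : (fun N : ℕ => Real.exp (-(r * (N : ℝ) ^ δ))) =O[atTop]
      fun N : ℕ => (N : ℝ) ^ (-2 : ℝ) :=
    ((isLittleO_exp_neg_mul_rpow_atTop hr (-2 / δ)).comp_tendsto hpow).isBigO.congr
      (fun N => by simp [neg_mul]) hrpow
  exact summable_of_isBigO_nat (Real.summable_nat_rpow.2 (by norm_num)) hbigO

lemma ae_eventually_mem_of_measure_compl_le_exp {Ω : Type*} [MeasurableSpace Ω] {μ : Measure Ω}
    {E : ℕ → Set Ω} {r δ : ℝ} (hr : 0 < r) (hδ : 0 < δ)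
    (hE : ∀ N : ℕ, μ (E N)ᶜ ≤ ENNReal.ofReal (Real.exp (-(r * (N : ℝ) ^ δ)))) :
    ∀ᵐ ω ∂μ, ∀ᶠ N in atTop, ω ∈ E N := by
  have hsum : ∑' N, μ (E N)ᶜ ≠ ∞ := by
    refine ne_top_of_le_ne_top ?_ (ENNReal.tsum_le_tsum hE)
    rw [← ENNReal.ofReal_tsum_of_nonneg (fun _ => (Real.exp_pos _).le)
      (summable_exp_neg_mul_natCast_rpow hr hδ)]
    exact ENNReal.ofReal_ne_top
  filter_upwards [ae_eventually_notMem hsum] with ω hω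
  simpa using hω

lemma exists_one_le_ofReal_one_sub_mul_exp_le_measure {Ω : Type*} [MeasurableSpace Ω]
    {μ : Measure Ω} [IsProbabilityMeasure μ] {E : ℕ → Set Ω} {r δ : ℝ} (hr : 0 < r)
    (hE : ∀ N : ℕ, μ (E N)ᶜ ≤ ENNReal.ofReal (Real.exp (-(r * (N : ℝ) ^ δ)))) :
    ∃ C : ℝ, 1 ≤ C ∧
      ∀ N : ℕ, ENNReal.ofReal (1 - C * Real.exp (-(C⁻¹ * (N : ℝ) ^ δ))) ≤ μ (E N) := by
  refine ⟨max 1 r⁻¹, le_max_left _ _, fun N => ?_⟩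
  have hCr : (max 1 r⁻¹)⁻¹ ≤ r := inv_le_of_inv_le₀ hr (le_max_right _ _)
  have hNδ : 0 ≤ (N : ℝ) ^ δ := by positivity
  have htail : Real.exp (-(r * (N : ℝ) ^ δ)) ≤
      max 1 r⁻¹ * Real.exp (-((max 1 r⁻¹)⁻¹ * (N : ℝ) ^ δ)) :=
    calc Real.exp (-(r * (N : ℝ) ^ δ)) ≤ Real.exp (-((max 1 r⁻¹)⁻¹ * (N : ℝ) ^ δ)) := by
          gcongr
      _ ≤ _ := le_mul_of_one_le_left (Real.exp_pos _).le (le_max_left _ _)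
  calc ENNReal.ofReal (1 - max 1 r⁻¹ * Real.exp (-((max 1 r⁻¹)⁻¹ * (N : ℝ) ^ δ)))
      ≤ ENNReal.ofReal (1 - Real.exp (-(r * (N : ℝ) ^ δ))) := by gcongr
    _ = 1 - ENNReal.ofReal (Real.exp (-(r * (N : ℝ) ^ δ))) := by
        rw [ENNReal.ofReal_sub _ (Real.exp_pos _).le, ENNReal.ofReal_one]
    _ ≤ 1 - μ (E N)ᶜ := tsub_le_tsub_left (hE N) 1
    _ ≤ μ (E N) := by
        rw [tsub_le_iff_right, ← measure_univ (μ := μ), ← Set.union_compl_self (E N)]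
        exact measure_union_le _ _

lemma ofReal_le_measure_preimage_Icc {Ω : Type*} [MeasurableSpace Ω] {μ : Measure Ω} {α : ℝ}
    (hα : -2 ≤ α) {Y : Ω → ℤ} (hY : Measurable Y)
    (hlaw : ∀ k : ℤ, k ≠ 0 →
      μ {ω | Y ω = k} = ENNReal.ofReal ((Zalpha α)⁻¹ * |(k : ℝ)| ^ (-(2 + α))))
    {L : ℤ} (hL : 1 ≤ L) :
    ENNReal.ofReal ((Zalpha α)⁻¹ * 2 ^ (-(2 + α)) * (L : ℝ) ^ (-(1 + α))) ≤
      μ (Y ⁻¹' Finset.Icc L (2 * L)) := by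
  have hZ := Zalpha_nonneg α
  have hLpos : (0 : ℝ) < L := by exact_mod_cast hL
  set S := Finset.Icc L (2 * L)
  set m := (Zalpha α)⁻¹ * (2 * (L : ℝ)) ^ (-(2 + α)) with hm
  have hterm : ∀ k ∈ S, ENNReal.ofReal m ≤ μ (Y ⁻¹' {k}) := fun k hk => by
    obtain ⟨hLk, hk2L⟩ := Finset.mem_Icc.1 hk
    have hkpos : (0 : ℝ) < k := by exact_mod_cast hL.trans hLk
    change ENNReal.ofReal m ≤ μ {ω | Y ω = k}
    rw [hlaw k (by omega), abs_of_pos hkpos]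
    refine ENNReal.ofReal_le_ofReal (mul_le_mul_of_nonneg_left ?_ (by positivity))
    exact Real.rpow_le_rpow_of_nonpos hkpos (by exact_mod_cast hk2L) (by linarith)
  have hcard : (L : ℝ) ≤ S.card := by
    have : ((S.card : ℕ) : ℤ) = L + 1 := by simp [S, Int.card_Icc]; omega
    have : ((S.card : ℕ) : ℝ) = L + 1 := by exact_mod_cast this
    linarith
  have hmass : (Zalpha α)⁻¹ * 2 ^ (-(2 + α)) * (L : ℝ) ^ (-(1 + α)) = L * m := by
    rw [show -(1 + α) = 1 + -(2 + α) by ring, Real.rpow_add hLpos, Real.rpow_one, hm,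
      Real.mul_rpow (by norm_num) hLpos.le]
    ring
  calc ENNReal.ofReal ((Zalpha α)⁻¹ * 2 ^ (-(2 + α)) * (L : ℝ) ^ (-(1 + α)))
      ≤ ENNReal.ofReal (S.card * m) := by
        rw [hmass]; gcongr
    _ = S.card • ENNReal.ofReal m := by
        rw [ENNReal.ofReal_mul (by positivity), ENNReal.ofReal_natCast, nsmul_eq_mul]
    _ ≤ ∑ k ∈ S, μ (Y ⁻¹' {k}) := Finset.card_nsmul_le_sum S _ _ hterm
    _ = μ (Y ⁻¹' S) := sum_measure_preimage_singleton S fun k _ => hY (measurableSet_singleton k)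

lemma measure_biInter_preimage_compl_le_exp {Ω ι γ : Type*} [MeasurableSpace Ω]
    {μ : Measure Ω} [IsProbabilityMeasure μ] [MeasurableSpace γ] {X : ι → Ω → γ}
    (hX : ∀ i, Measurable (X i)) (hindep : iIndepFun X μ) {S : Set γ} (hS : MeasurableSet S)
    (J : Finset ι) {p : ℝ} (hp : 0 ≤ p) (hpS : ∀ j ∈ J, ENNReal.ofReal p ≤ μ (X j ⁻¹' S)) :
    μ (⋂ j ∈ J, X j ⁻¹' Sᶜ) ≤ ENNReal.ofReal (Real.exp (-(p * J.card))) := by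
  have hmiss : ∀ j ∈ J, μ (X j ⁻¹' Sᶜ) ≤ ENNReal.ofReal (Real.exp (-p)) := fun j hj => by
    rw [Set.preimage_compl, prob_compl_eq_one_sub (hX j hS), tsub_le_iff_right]
    calc (1 : ℝ≥0∞) = ENNReal.ofReal 1 := ENNReal.ofReal_one.symm
      _ ≤ ENNReal.ofReal (Real.exp (-p) + p) := by
        gcongr; linarith [Real.add_one_le_exp (-p)]
      _ ≤ ENNReal.ofReal (Real.exp (-p)) + μ (X j ⁻¹' S) := by
        rw [ENNReal.ofReal_add (Real.exp_pos _).le hp]; gcongr; exact hpS j hj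
  calc μ (⋂ j ∈ J, X j ⁻¹' Sᶜ) = ∏ j ∈ J, μ (X j ⁻¹' Sᶜ) :=
        hindep.measure_inter_preimage_eq_mul J fun _ _ => hS.compl
    _ ≤ ∏ _j ∈ J, ENNReal.ofReal (Real.exp (-p)) := Finset.prod_le_prod' hmiss
    _ = ENNReal.ofReal (Real.exp (-(p * J.card))) := by
        rw [Finset.prod_const, ← ENNReal.ofReal_pow (Real.exp_pos _).le, ← Real.exp_nat_mul]
        ring_nf

/-- `illuminatedRunEvent X ⌈c N^{1+β}⌉ (ℓ N)` is the event `Ẽ_N`. -/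
def illuminatedRunEvent {Ω : Type*} (X : ℤ → Ω → ℤ) (R L : ℤ) : Set Ω :=
  {ω | ∃ j : ℤ, |j| ≤ R ∧ ∀ k : ℤ, |k - j| ≤ L → ThetaSite X k ω = 1}

section LongRangeModel

variable {Ω : Type*} [MeasurableSpace Ω] {μ : Measure Ω} [IsProbabilityMeasure μ] {α : ℝ}
  {X : ℤ → Ω → ℤ}

lemma measure_illuminatedRunEvent_compl_le (hα : -2 ≤ α) (hX : ∀ m, Measurable (X m))
    (hindep : iIndepFun X μ) (hident : ∀ m : ℤ, IdentDistrib (X m) (X 0) μ μ)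
    (hlaw : ∀ k : ℤ, k ≠ 0 →
      μ {ω | X 0 ω = k} = ENNReal.ofReal ((Zalpha α)⁻¹ * |(k : ℝ)| ^ (-(2 + α))))
    {R L : ℤ} (hR : 0 ≤ R) (hL : 1 ≤ L) :
    μ (illuminatedRunEvent X R L)ᶜ ≤ ENNReal.ofReal (Real.exp
      (-((Zalpha α)⁻¹ * 2 ^ (-(2 + α)) * (L : ℝ) ^ (-(1 + α)) * (2 * R + 1)))) := by
  set S : Set ℤ := ↑(Finset.Icc L (2 * L))
  have hS : MeasurableSet S := (Finset.finite_toSet _).measurableSet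
  have hmiss : (illuminatedRunEvent X R L)ᶜ ⊆ ⋂ j ∈ Finset.Icc (-R) R, X j ⁻¹' Sᶜ := by
    intro ω hω
    simp only [Set.mem_iInter]
    intro j hj hXj
    refine hω ⟨j, abs_le.2 (Finset.mem_Icc.1 hj), fun k hk => ?_⟩
    exact thetaSite_eq_one_of_abs_sub_le (hk.trans (Finset.mem_Icc.1 hXj).1)
  have hcard : (((Finset.Icc (-R) R).card : ℕ) : ℝ) = 2 * R + 1 := by
    have : (((Finset.Icc (-R) R).card : ℕ) : ℤ) = 2 * R + 1 := by simp [Int.card_Icc]; omega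
    exact_mod_cast this
  have hp : 0 ≤ (Zalpha α)⁻¹ * 2 ^ (-(2 + α)) * (L : ℝ) ^ (-(1 + α)) := by
    have := Zalpha_nonneg α
    positivity
  calc μ (illuminatedRunEvent X R L)ᶜ ≤ μ (⋂ j ∈ Finset.Icc (-R) R, X j ⁻¹' Sᶜ) :=
        measure_mono hmiss
    _ ≤ _ := measure_biInter_preimage_compl_le_exp hX hindep hS _ hp fun j _ =>
        (hident j).measure_mem_eq hS ▸ ofReal_le_measure_preimage_Icc hα (hX 0) hlaw hL
    _ = _ := by rw [hcard]

lemma measure_illuminatedRunEvent_compl_le_exp_rpow (hα : -2 ≤ α) {β c : ℝ} (hαβ : α < β)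
    (hc : 0 ≤ c) {ℓ : ℕ} (hℓ : 1 ≤ ℓ) (hX : ∀ m, Measurable (X m)) (hindep : iIndepFun X μ)
    (hident : ∀ m : ℤ, IdentDistrib (X m) (X 0) μ μ)
    (hlaw : ∀ k : ℤ, k ≠ 0 →
      μ {ω | X 0 ω = k} = ENNReal.ofReal ((Zalpha α)⁻¹ * |(k : ℝ)| ^ (-(2 + α))))
    (N : ℕ) :
    μ (illuminatedRunEvent X ⌈c * (N : ℝ) ^ (1 + β)⌉ ((ℓ : ℤ) * N))ᶜ ≤ ENNReal.ofReal (Real.exp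
      (-((Zalpha α)⁻¹ * 2 ^ (-(2 + α)) * (ℓ : ℝ) ^ (-(1 + α)) * c * (N : ℝ) ^ (β - α)))) := by
  rcases Nat.eq_zero_or_pos N with rfl | hN
  · rw [Nat.cast_zero, Real.zero_rpow (sub_ne_zero.2 hαβ.ne'), mul_zero, neg_zero, Real.exp_zero,
      ENNReal.ofReal_one]
    exact prob_le_one
  have hNpos : (0 : ℝ) < N := by exact_mod_cast hN
  have hZ := Zalpha_nonneg α
  have hR : c * (N : ℝ) ^ (1 + β) ≤ 2 * (⌈c * (N : ℝ) ^ (1 + β)⌉ : ℝ) + 1 := by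
    have := Int.le_ceil (c * (N : ℝ) ^ (1 + β))
    have : 0 ≤ c * (N : ℝ) ^ (1 + β) := by positivity
    linarith
  have hrpow : (N : ℝ) ^ (β - α) = (N : ℝ) ^ (-(1 + α)) * (N : ℝ) ^ (1 + β) := by
    rw [← Real.rpow_add hNpos]; ring_nf
  refine (measure_illuminatedRunEvent_compl_le hα hX hindep hident hlaw
    (Int.ceil_nonneg (by positivity))
    (one_le_mul_of_one_le_of_one_le (by exact_mod_cast hℓ) (by exact_mod_cast hN))).trans ?_
  gcongr ENNReal.ofReal (Real.exp (-?_))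
  push_cast
  rw [Real.mul_rpow (by positivity) hNpos.le, hrpow]
  calc (Zalpha α)⁻¹ * 2 ^ (-(2 + α)) * (ℓ : ℝ) ^ (-(1 + α)) * c *
        ((N : ℝ) ^ (-(1 + α)) * (N : ℝ) ^ (1 + β))
      = (Zalpha α)⁻¹ * 2 ^ (-(2 + α)) * ((ℓ : ℝ) ^ (-(1 + α)) * (N : ℝ) ^ (-(1 + α))) *
          (c * (N : ℝ) ^ (1 + β)) := by ring
    _ ≤ _ := by gcongr

end LongRangeModel

theorem algebraic_scale_selection_general {Ω : Type*} [MeasurableSpace Ω] (μ : Measure Ω)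
    [IsProbabilityMeasure μ]
    (α β c : ℝ) (hα0 : 0 < α) (hαβ : α < β) (hc : 0 < c) (ℓ : ℕ) (hℓ : 1 ≤ ℓ)
    (X : ℤ → Ω → ℤ) (hXm : ∀ m, Measurable (X m))
    (hindep : iIndepFun X μ)
    (hident : ∀ m : ℤ, IdentDistrib (X m) (X 0) μ μ)
    (hlaw : ∀ k : ℤ, k ≠ 0 →
      μ {ω | X 0 ω = k} = ENNReal.ofReal ((Zalpha α)⁻¹ * |(k : ℝ)| ^ (-(2 + α)))) :
    ∃ C : ℝ, 1 ≤ C ∧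
      (∀ N : ℕ,
        ENNReal.ofReal (1 - C * Real.exp (-(C⁻¹ * (N : ℝ) ^ (β - α)))) ≤
          μ {ω | ∃ j : ℤ, |j| ≤ ⌈c * (N : ℝ) ^ (1 + β)⌉ ∧
              ∀ k : ℤ, |k - j| ≤ (ℓ : ℤ) * (N : ℤ) → ThetaSite X k ω = 1}) ∧
      (∀ᵐ ω ∂μ, ∀ᶠ N : ℕ in atTop,
        ∃ j : ℤ, |j| ≤ ⌈c * (N : ℝ) ^ (1 + β)⌉ ∧
          ∀ k : ℤ, |k - j| ≤ (ℓ : ℤ) * (N : ℤ) → ThetaSite X k ω = 1) := by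
  have hZ := one_le_Zalpha (by linarith : -1 < α)
  have hr : 0 < (Zalpha α)⁻¹ * 2 ^ (-(2 + α)) * (ℓ : ℝ) ^ (-(1 + α)) * c := by positivity
  have htail := measure_illuminatedRunEvent_compl_le_exp_rpow (by linarith) hαβ hc.le hℓ hXm
    hindep hident hlaw
  obtain ⟨C, hC1, hC⟩ := exists_one_le_ofReal_one_sub_mul_exp_le_measure hr htail
  exact ⟨C, hC1, hC, ae_eventually_mem_of_measure_compl_le_exp hr (sub_pos.2 hαβ) htail⟩

/-- **Proposition 6.3 (algebraic scale selection).** Fix `0 < α < β`, `c > 0`, `ℓ ≥ 1`.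
Let `Ẽ_N` be the event that some `j ∈ ℤ` with `|j| ≤ ⌈c N^{1+β}⌉` is the center of a run of
illuminated sites of radius `ℓN`. Then there is a constant `C ≥ 1` with
`ℙ(Ẽ_N) ≥ 1 - C exp(-C⁻¹ N^{β-α})` for every `N`; in particular almost surely all but
finitely many of the events `Ẽ_N` occur. -/
theorem algebraic_scale_selection {Ω : Type*} [MeasurableSpace Ω] (μ : Measure Ω)
    [IsProbabilityMeasure μ]
    (α β c : ℝ) (hα0 : 0 < α) (hαβ : α < β) (hc : 0 < c) (ℓ : ℕ) (hℓ : 1 ≤ ℓ)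
    (X : ℤ → Ω → ℤ) (hXm : ∀ m, Measurable (X m))
    (hindep : iIndepFun X μ)
    (hident : ∀ m : ℤ, IdentDistrib (X m) (X 0) μ μ)
    (hlaw : ∀ k : ℤ, k ≠ 0 →
      μ {ω | X 0 ω = k} = ENNReal.ofReal ((Zalpha α)⁻¹ * |(k : ℝ)| ^ (-(2 + α))))
    (hlaw0 : μ {ω | X 0 ω = 0} = 0) :
    ∃ C : ℝ, 1 ≤ C ∧
      (∀ N : ℕ,
        ENNReal.ofReal (1 - C * Real.exp (-(C⁻¹ * (N : ℝ) ^ (β - α)))) ≤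
          μ {ω | ∃ j : ℤ, |j| ≤ ⌈c * (N : ℝ) ^ (1 + β)⌉ ∧
              ∀ k : ℤ, |k - j| ≤ (ℓ : ℤ) * (N : ℤ) → ThetaSite X k ω = 1}) ∧
      (∀ᵐ ω ∂μ, ∀ᶠ N : ℕ in atTop,
        ∃ j : ℤ, |j| ≤ ⌈c * (N : ℝ) ^ (1 + β)⌉ ∧
          ∀ k : ℤ, |k - j| ≤ (ℓ : ℤ) * (N : ℤ) → ThetaSite X k ω = 1) :=
  algebraic_scale_selection_general μ α β c hα0 hαβ hc ℓ hℓ X hXm hindep hident hlaw
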